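/- Let P_1, …, P_N (N ≥ 2) be probability measures on a measurable space (Ω, 𝓕) and let F_1, …, F_N ∈ 𝓕 be pairwise disjoint events. If δ := min_{i∈[N]} P_i(F_i) ≥ 1/2, then (2δ − 1)·log( (δ/(1−δ))·(N−1) ) ≤ (1/(N−1)) · Σ_{i∈[N]} KL(P_i ‖ P_1). -/

import Mathlib

open MeasureTheory ProbabilityTheory Matrix Finset Real

noncomputable section

/-- The entries of a finite family of reals, sorted in descending order and
indexed by `ℕ` (`0`-indexed), padded with `0`. -/
def sortedDesc {n : Type*} [Fintype n] (f : n → ℝ) : ℕ → ℝ := fun i =>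
  let g : Fin (Fintype.card n) → ℝ := f ∘ (Fintype.equivFin n).symm
  if h : i < Fintype.card n then
    (g ∘ Tuple.sort g) ⟨Fintype.card n - 1 - i, by omega⟩
  else 0

/-- `sval M i` is the `i`-th largest singular value of a real matrix `M` (`1`-indexed). -/
def sval {m n : Type*} [Fintype m] [Fintype n] [DecidableEq n]
    (M : Matrix m n ℝ) (i : ℕ) : ℝ :=
  Real.sqrt (sortedDesc (by simpa only [Matrix.conjTranspose_eq_transpose_of_trivial] using
      Matrix.isHermitian_conjTranspose_mul_self M : (Mᵀ * M).IsHermitian).eigenvalues (i - 1))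

/-- The minimum nonzero singular value of a matrix. -/
def svalMin {m n : Type*} [Fintype m] [Fintype n] [DecidableEq n]
    (M : Matrix m n ℝ) : ℝ :=
  sval M M.rank

/-- The spectral norm (ℓ²-operator norm) of a real matrix. -/
def spec {m n : Type*} [Fintype m] [Fintype n] [DecidableEq n] (M : Matrix m n ℝ) : ℝ :=
  ‖LinearMap.toContinuousLinearMap (Matrix.toEuclideanLin M)‖

/-- The standard Gaussian measure on `n → ℝ`. -/
def stdGaussianPi (n : Type*) [Fintype n] : Measure (n → ℝ) :=
  Measure.pi fun _ => gaussianReal 0 1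

/-- The centered Gaussian measure `N(0, S)` on `n → ℝ`, i.e. the law of `S^{1/2} x` for a
standard Gaussian `x` (junk value if `S` is not positive semi-definite). -/
def gaussianVec {n : Type*} [Fintype n] [DecidableEq n] (S : Matrix n n ℝ) :
    Measure (n → ℝ) :=
  by classical exact
    if h : S.PosSemidef then (stdGaussianPi n).map (fun x => (h.1.eigenvectorUnitary.1 *
      diagonal ((RCLike.ofReal : ℝ → ℝ) ∘ Real.sqrt ∘ h.1.eigenvalues) *
      (star h.1.eigenvectorUnitary : Matrix n n ℝ)).mulVec x) else 0

/-- The inverse square root `M^{-1/2}` of a positive semi-definite matrix (junk value `0`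
otherwise). -/
def invSqrt {n : Type*} [Fintype n] [DecidableEq n] (M : Matrix n n ℝ) : Matrix n n ℝ :=
  by classical exact if h : M.PosSemidef then (h.1.eigenvectorUnitary.1 *
    diagonal ((RCLike.ofReal : ℝ → ℝ) ∘ Real.sqrt ∘ h.1.eigenvalues) *
    (star h.1.eigenvectorUnitary : Matrix n n ℝ))⁻¹ else 0

/-- Zero-padding of a finite-dimensional vector into `ℕ → ℝ`, used to encode mutual
independence of families of random vectors of different dimensions via a common codomain. -/
def padFn {d : ℕ} (v : Fin d → ℝ) : ℕ → ℝ := fun i => if h : i < d then v ⟨i, h⟩ else 0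

/-- The controllability matrix `[B, AB, …, A^{r-1}B]` of a linear system. -/
def ctrbMat {r m : ℕ} (A : Matrix (Fin r) (Fin r) ℝ) (B : Matrix (Fin r) (Fin m) ℝ) :
    Matrix (Fin r) (Fin m × Fin r) ℝ :=
  Matrix.of fun i p => (A ^ (p.2 : ℕ) * B) i p.1

/-- The observability matrix `[C; CA; …; CA^{r-1}]` of a linear system. -/
def obsvMat {r n : ℕ} (A : Matrix (Fin r) (Fin r) ℝ) (C : Matrix (Fin n) (Fin r) ℝ) :
    Matrix (Fin n × Fin r) (Fin r) ℝ :=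
  Matrix.of fun p j => (C * A ^ (p.2 : ℕ)) p.1 j

/-- `P` is the orthogonal projection onto the span of eigenvectors of `M` corresponding to
its `k` largest eigenvalues (i.e. onto the "first `k` eigenvectors" of `M`). -/
def IsTopEigenProj {n : Type*} [Fintype n] [DecidableEq n]
    (M : Matrix n n ℝ) (k : ℕ) (P : Matrix n n ℝ) : Prop :=
  ∃ (v : n → (n → ℝ)) (lam : n → ℝ) (e : n ≃ Fin (Fintype.card n)),
    (∀ i j, v i ⬝ᵥ v j = if i = j then 1 else 0) ∧
    (∀ i, M.mulVec (v i) = lam i • v i) ∧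
    (∀ i j, e i ≤ e j → lam j ≤ lam i) ∧
    P = ∑ i ∈ Finset.univ.filter (fun i => (e i : ℕ) < k), vecMulVec (v i) (v i)

/-- The estimated order in the Col-Approx algorithm: the largest index `i ≥ 1` such that the
`i`-th spectral gap of `M` exceeds the threshold `τ`. -/
def gapRank {n : Type*} [Fintype n] [DecidableEq n] (M : Matrix n n ℝ) (τ : ℝ) : ℕ :=
  sSup {i : ℕ | 1 ≤ i ∧ sval M i - sval M (i + 1) > τ}

end

open scoped ENNReal

/-- Kullback–Leibler divergence of `P` from `Q`, with value `∞` when `P` is not absolutely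
continuous w.r.t. `Q` or the log-likelihood ratio is not integrable. -/
noncomputable def klDiv {Ω : Type*} [MeasurableSpace Ω] (P Q : Measure Ω) : ℝ≥0∞ :=
  by classical exact
    if P ≪ Q ∧ Integrable (llr P Q) P then ENNReal.ofReal (∫ ω, llr P Q ω ∂P) else ⊤

open MeasureTheory Real

lemma setIntegral_llr_ge {Ω : Type*} [MeasurableSpace Ω] (P Q : Measure Ω)
    [IsProbabilityMeasure P] [IsProbabilityMeasure Q]
    (hPQ : P ≪ Q) (hint : Integrable (llr P Q) P) {s : Set Ω} (hs : MeasurableSet s) :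
    (P s).toReal * Real.log ((P s).toReal / (Q s).toReal) ≤ ∫ x in s, llr P Q x ∂P := by
  by_cases hps : P s = 0
  · rw [Measure.restrict_eq_zero.mpr hps]
    simp [hps]
  have hqs : Q s ≠ 0 := fun h => hps (hPQ h)
  set p := (P s).toReal with hp_def
  set q := (Q s).toReal with hq_def
  have hp : 0 < p := ENNReal.toReal_pos hps (measure_ne_top _ _)
  have hq : 0 < q := ENNReal.toReal_pos hqs (measure_ne_top _ _)
  set g : Ω → ℝ := fun x => (P.rnDeriv Q x).toReal with hg_def
  have hgmeas : Measurable g := (Measure.measurable_rnDeriv P Q).ennreal_toReal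
  have hpos : ∀ᵐ x ∂P, 0 < P.rnDeriv Q x := Measure.rnDeriv_pos hPQ
  have hfin : ∀ᵐ x ∂P, P.rnDeriv Q x < ⊤ := hPQ.ae_le (Measure.rnDeriv_lt_top P Q)
  -- lintegral of the inverse density
  have hlint : ∫⁻ x in s, ENNReal.ofReal ((g x)⁻¹) ∂P ≤ Q s := by
    have hcongr : ∀ᵐ x ∂(P.restrict s), ENNReal.ofReal ((g x)⁻¹) = (P.rnDeriv Q x)⁻¹ := by
      filter_upwards [ae_restrict_of_ae hpos, ae_restrict_of_ae hfin] with x hx1 hx2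
      have hgx : 0 < g x := ENNReal.toReal_pos hx1.ne' hx2.ne
      rw [ENNReal.ofReal_inv_of_pos hgx, ENNReal.ofReal_toReal hx2.ne]
    rw [lintegral_congr_ae hcongr]
    have hPd : P.restrict s = (Q.restrict s).withDensity (P.rnDeriv Q) := by
      conv_lhs => rw [← Measure.withDensity_rnDeriv_eq P Q hPQ]
      rw [restrict_withDensity hs]
    rw [hPd, lintegral_withDensity_eq_lintegral_mul _ (Measure.measurable_rnDeriv P Q)
      (g := fun x => (P.rnDeriv Q x)⁻¹) (Measure.measurable_rnDeriv P Q).inv]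
    calc ∫⁻ x in s, (P.rnDeriv Q * fun x => (P.rnDeriv Q x)⁻¹) x ∂Q
        ≤ ∫⁻ _ in s, 1 ∂Q := lintegral_mono fun x => ENNReal.mul_inv_le_one _
      _ = Q s := by simp
  have hginv_nonneg : ∀ x, (0:ℝ) ≤ (g x)⁻¹ := fun x => inv_nonneg.2 ENNReal.toReal_nonneg
  have hig : IntegrableOn (fun x => (g x)⁻¹) s P := by
    refine ⟨(hgmeas.inv.aestronglyMeasurable).restrict, ?_⟩
    rw [hasFiniteIntegral_iff_ofReal (Filter.Eventually.of_forall hginv_nonneg)]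
    exact lt_of_le_of_lt hlint (measure_lt_top _ _)
  have hIle : ∫ x in s, (g x)⁻¹ ∂P ≤ q := by
    rw [integral_eq_lintegral_of_nonneg_ae (Filter.Eventually.of_forall hginv_nonneg)
      (hgmeas.inv.aestronglyMeasurable).restrict]
    exact ENNReal.toReal_mono (measure_ne_top _ _) hlint
  -- pointwise bound
  have key : ∀ᵐ x ∂(P.restrict s), 1 - (p/q) * (g x)⁻¹ ≤ llr P Q x - Real.log (p/q) := by
    filter_upwards [ae_restrict_of_ae hpos, ae_restrict_of_ae hfin] with x hx1 hx2
    have hgx : 0 < g x := ENNReal.toReal_pos hx1.ne' hx2.ne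
    have hy : 0 < g x * (q/p) := by positivity
    have h1 : Real.log ((g x * (q/p))⁻¹) ≤ (g x * (q/p))⁻¹ - 1 :=
      Real.log_le_sub_one_of_pos (by positivity)
    rw [Real.log_inv] at h1
    have h2 : 1 - (g x * (q/p))⁻¹ ≤ Real.log (g x * (q/p)) := by linarith
    have h3 : Real.log (g x * (q/p)) = Real.log (g x) - Real.log (p/q) := by
      rw [Real.log_mul hgx.ne' (by positivity), Real.log_div hq.ne' hp.ne',
        Real.log_div hp.ne' hq.ne']
      ring
    have h4 : (g x * (q/p))⁻¹ = (p/q) * (g x)⁻¹ := by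
      rw [mul_inv, inv_div]; ring
    rw [h3, h4] at h2
    exact h2
  have hint1 : Integrable (fun x => 1 - (p/q) * (g x)⁻¹) (P.restrict s) :=
    (integrable_const 1).sub (hig.const_mul _)
  have hint2 : Integrable (fun x => llr P Q x - Real.log (p/q)) (P.restrict s) :=
    hint.integrableOn.sub (integrable_const _)
  have hmono := integral_mono_ae hint1 hint2 key
  rw [integral_sub (integrable_const 1) (hig.const_mul _),
    integral_sub hint.integrableOn (integrable_const _)] at hmono
  simp only [integral_const, Measure.restrict_apply_univ, smul_eq_mul, mul_one,
    integral_const_mul, measureReal_restrict_apply_univ, measureReal_def, ← hp_def] at hmono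
  -- hmono : p - (p/q) * ∫ g⁻¹ ≤ ∫ llr - p * log (p/q)
  have h5 : p - (p/q) * ∫ x in s, (g x)⁻¹ ∂P ≥ p - (p/q) * q := by
    have := mul_le_mul_of_nonneg_left hIle (le_of_lt (div_pos hp hq))
    linarith
  have h6 : p - (p/q) * q = 0 := by field_simp; ring
  nlinarith [hmono]


noncomputable def klb (a b : ℝ) : ℝ :=
  a * Real.log (a / b) + (1 - a) * Real.log ((1 - a) / (1 - b))

lemma klb_expand {a b : ℝ} (ha : 0 < a) (ha1 : a < 1) (hb : 0 < b) (hb1 : b < 1) :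
    klb a b = a * Real.log a + (1 - a) * Real.log (1 - a)
      - a * Real.log b - (1 - a) * Real.log (1 - b) := by
  unfold klb
  rw [Real.log_div ha.ne' hb.ne', Real.log_div (by linarith : (0:ℝ) < 1 - a).ne'
    (by linarith : (0:ℝ) < 1 - b).ne']
  ring

lemma klb_mono_left {b δ a : ℝ} (hb0 : 0 < b) (hbhalf : b ≤ 1/2) (hδ : 1/2 ≤ δ)
    (hδa : δ ≤ a) (ha1 : a ≤ 1) : klb δ b ≤ klb a b := by
  have hb1 : b < 1 := by linarith
  set c : ℝ := Real.log (1 - b) - Real.log b with hc_def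
  set φ : ℝ → ℝ := fun x => x * Real.log x + (1 - x) * Real.log (1 - x) + x * c with hφ_def
  have heq : ∀ x, 1/2 ≤ x → x ≤ 1 → klb x b = φ x - Real.log (1 - b) := by
    intro x hx hx1
    rcases lt_or_eq_of_le hx1 with h | h
    · have hx0 : 0 < x := by linarith
      rw [klb_expand hx0 h hb0 hb1]
      simp only [hφ_def, hc_def]
      ring
    · subst h
      simp only [klb, hφ_def, hc_def]
      rw [Real.log_div one_ne_zero hb0.ne']
      norm_num
  have hmono : MonotoneOn φ (Set.Icc (1/2 : ℝ) 1) := by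
    have hderiv : ∀ x ∈ Set.Ioo (1/2 : ℝ) 1,
        HasDerivAt φ (Real.log x - Real.log (1 - x) + c) x := by
      intro x hx
      have hx0 : x ≠ 0 := by rw [Set.mem_Ioo] at hx; intro h; rw [h] at hx; linarith [hx.1]
      have hx1 : (1:ℝ) - x ≠ 0 := by rw [Set.mem_Ioo] at hx; intro h; linarith [hx.2]
      have h1 : HasDerivAt (fun x : ℝ => x * Real.log x) (Real.log x + 1) x :=
        Real.hasDerivAt_mul_log hx0
      have h2 : HasDerivAt (fun x : ℝ => (1 - x) * Real.log (1 - x))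
          ((Real.log (1 - x) + 1) * (-1)) x := by
        have := (Real.hasDerivAt_mul_log hx1).comp x
          ((hasDerivAt_id x).const_sub 1)
        simpa [Function.comp_def] using this
      have h3 : HasDerivAt (fun x : ℝ => x * c) c x := by
        simpa using (hasDerivAt_id x).mul_const c
      have := (h1.add h2).add h3
      exact this.congr_deriv (by ring)
    refine monotoneOn_of_deriv_nonneg (convex_Icc _ _) ?_ ?_ ?_
    · apply Continuous.continuousOn
      exact (Real.continuous_mul_log.add
        (Real.continuous_mul_log.comp (continuous_const.sub continuous_id))).add
        (continuous_id.mul continuous_const)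
    · rw [interior_Icc]
      intro x hx
      exact (hderiv x hx).differentiableAt.differentiableWithinAt
    · rw [interior_Icc]
      intro x hx
      rw [(hderiv x hx).deriv]
      rw [Set.mem_Ioo] at hx
      have h4 : Real.log (1 - x) ≤ Real.log x :=
        Real.log_le_log (by linarith) (by linarith)
      have h5 : Real.log b ≤ Real.log (1 - b) :=
        Real.log_le_log hb0 (by linarith)
      simp only [hc_def]
      linarith
  rw [heq δ hδ (by linarith), heq a (by linarith) ha1]
  have := hmono (Set.mem_Icc.2 ⟨hδ, by linarith⟩) (Set.mem_Icc.2 ⟨by linarith, ha1⟩) hδa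
  linarith

lemma klb_anti_right {δ b β : ℝ} (hδ : 1/2 ≤ δ) (hδ1 : δ < 1) (hb : 0 < b)
    (hbβ : b ≤ β) (hβδ : β ≤ δ) : klb δ β ≤ klb δ b := by
  have hδ0 : 0 < δ := by linarith
  set K : ℝ := δ * Real.log δ + (1 - δ) * Real.log (1 - δ) with hK_def
  set ψ : ℝ → ℝ := fun y => K - (δ * Real.log y + (1 - δ) * Real.log (1 - y)) with hψ_def
  have heq : ∀ y, 0 < y → y ≤ δ → klb δ y = ψ y := by
    intro y hy hyδ
    rw [klb_expand hδ0 hδ1 hy (by linarith)]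
    simp only [hψ_def, hK_def]
    ring
  have hanti : AntitoneOn ψ (Set.Icc b β) := by
    have hderiv : ∀ y ∈ Set.Ioo b β,
        HasDerivAt ψ (-(δ * y⁻¹ + (1 - δ) * ((1 - y)⁻¹ * (-1)))) y := by
      intro y hy
      rw [Set.mem_Ioo] at hy
      have hy0 : 0 < y := lt_trans hb hy.1
      have hy1 : (0:ℝ) < 1 - y := by nlinarith [le_trans hy.2.le hβδ]
      have h1 : HasDerivAt (fun y : ℝ => Real.log y) y⁻¹ y := Real.hasDerivAt_log hy0.ne'
      have h2 : HasDerivAt (fun y : ℝ => Real.log (1 - y)) ((1 - y)⁻¹ * (-1)) y :=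
        (Real.hasDerivAt_log hy1.ne').comp y ((hasDerivAt_id y).const_sub 1)
      exact ((h1.const_mul δ).add (h2.const_mul (1 - δ))).const_sub K
    refine antitoneOn_of_deriv_nonpos (convex_Icc _ _) ?_ ?_ ?_
    · intro y hy
      rw [Set.mem_Icc] at hy
      have hy0 : 0 < y := lt_of_lt_of_le hb hy.1
      have hy1 : (0:ℝ) < 1 - y := by nlinarith [le_trans hy.2 hβδ]
      have l1 : ContinuousAt Real.log y := Real.continuousAt_log hy0.ne'
      have l2 : ContinuousAt (fun y : ℝ => Real.log (1 - y)) y :=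
        (Real.continuousAt_log hy1.ne').comp (continuousAt_const.sub continuousAt_id)
      exact (continuousAt_const.sub ((continuousAt_const.mul l1).add
        (continuousAt_const.mul l2))).continuousWithinAt
    · rw [interior_Icc]
      intro y hy
      exact (hderiv y hy).differentiableAt.differentiableWithinAt
    · rw [interior_Icc]
      intro y hy
      rw [(hderiv y hy).deriv]
      rw [Set.mem_Ioo] at hy
      have hy0 : 0 < y := lt_trans hb hy.1
      have hyδ : y ≤ δ := le_trans hy.2.le hβδ
      have hy1 : (0:ℝ) < 1 - y := by nlinarith
      have hkey : (1 - δ) / (1 - y) ≤ δ / y := by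
        rw [div_le_div_iff₀ hy1 hy0]
        nlinarith
      rw [div_eq_mul_inv, div_eq_mul_inv] at hkey
      nlinarith
  have hβ0 : 0 < β := lt_of_lt_of_le hb hbβ
  rw [heq b hb (hbβ.trans hβδ), heq β hβ0 hβδ]
  exact hanti (Set.mem_Icc.2 ⟨le_refl b, hbβ⟩) (Set.mem_Icc.2 ⟨hbβ, le_refl β⟩) hbβ

lemma sum_log_le_card_mul_log {ι : Type*} (t : Finset ι) (ht : t.Nonempty) (g : ι → ℝ)
    (hg : ∀ i ∈ t, 0 < g i) :
    ∑ i ∈ t, Real.log (g i) ≤ t.card * Real.log ((∑ i ∈ t, g i) / t.card) := by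
  have hcard : (0:ℝ) < t.card := by
    exact_mod_cast Finset.card_pos.2 ht
  have := strictConcaveOn_log_Ioi.concaveOn.le_map_sum (t := t)
    (w := fun _ => (t.card : ℝ)⁻¹) (p := g)
    (fun i _ => by positivity)
    (by rw [Finset.sum_const, nsmul_eq_mul]; field_simp)
    (fun i hi => Set.mem_Ioi.2 (hg i hi))
  simp only [smul_eq_mul] at this
  rw [← Finset.mul_sum, ← Finset.mul_sum] at this
  have h2 : Real.log ((t.card:ℝ)⁻¹ * ∑ i ∈ t, g i) = Real.log ((∑ i ∈ t, g i) / t.card) := by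
    rw [inv_mul_eq_div]
  rw [h2] at this
  calc ∑ i ∈ t, Real.log (g i) = t.card * ((t.card:ℝ)⁻¹ * ∑ i ∈ t, Real.log (g i)) := by
        field_simp
    _ ≤ t.card * Real.log ((∑ i ∈ t, g i) / t.card) := by
        apply mul_le_mul_of_nonneg_left this hcard.le

lemma klb_final {δ : ℝ} {n : ℕ} (hδ : 1/2 ≤ δ) (hδ1 : δ < 1) (hn : 1 ≤ n) :
    (2*δ - 1) * Real.log (δ / (1 - δ) * n) ≤ klb δ ((1 - δ)/n) := by
  have hδ0 : 0 < δ := by linarith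
  have h1δ : (0:ℝ) < 1 - δ := by linarith
  have hn0 : (0:ℝ) < n := by exact_mod_cast hn
  have hn1 : (1:ℝ) ≤ n := by exact_mod_cast hn
  obtain ⟨β, hβ_def⟩ : ∃ β : ℝ, β = (1 - δ)/n := ⟨_, rfl⟩
  rw [← hβ_def]
  have hβ0 : 0 < β := by rw [hβ_def]; positivity
  have hβδ : β ≤ 1 - δ := by
    rw [hβ_def, div_le_iff₀ hn0]
    nlinarith
  have h1β : (0:ℝ) < 1 - β := by linarith
  have hXeq : δ / β = δ / (1 - δ) * n := by
    rw [hβ_def]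
    field_simp
  have hprod : δ / β * ((1 - δ) / (1 - β)) = δ * n / (1 - β) := by
    rw [hXeq]
    field_simp
  have hge1 : (1:ℝ) ≤ δ * n / (1 - β) := by
    rw [le_div_iff₀ h1β]
    have e1 : (0:ℝ) ≤ (n:ℝ) - 1 := by linarith
    have e2 : (0:ℝ) ≤ δ * n - (1 - δ) := by nlinarith
    have e3 : β * n = 1 - δ := by rw [hβ_def]; field_simp
    nlinarith [mul_nonneg e1 e2, mul_pos hβ0 hn0]
  have hlog : 0 ≤ Real.log (δ / β) + Real.log ((1 - δ) / (1 - β)) := by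
    rw [← Real.log_mul (by positivity) (by positivity), hprod]
    exact Real.log_nonneg hge1
  unfold klb
  rw [← hXeq]
  nlinarith [mul_nonneg h1δ.le hlog]

lemma integral_llr_ge_klb {Ω : Type*} [MeasurableSpace Ω] (P Q : Measure Ω)
    [IsProbabilityMeasure P] [IsProbabilityMeasure Q]
    (hPQ : P ≪ Q) (hint : Integrable (llr P Q) P) {s : Set Ω} (hs : MeasurableSet s) :
    klb (P s).toReal (Q s).toReal ≤ ∫ x, llr P Q x ∂P := by
  have h1 := setIntegral_llr_ge P Q hPQ hint hs
  have h2 := setIntegral_llr_ge P Q hPQ hint hs.compl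
  have hps : (P sᶜ).toReal = 1 - (P s).toReal := by
    rw [prob_compl_eq_one_sub hs, ENNReal.toReal_sub_of_le prob_le_one ENNReal.one_ne_top,
      ENNReal.toReal_one]
  have hqs : (Q sᶜ).toReal = 1 - (Q s).toReal := by
    rw [prob_compl_eq_one_sub hs, ENNReal.toReal_sub_of_le prob_le_one ENNReal.one_ne_top,
      ENNReal.toReal_one]
  rw [hps, hqs] at h2
  have hadd := integral_add_compl hs hint
  unfold klb
  linarith

/-- Birgé's inequality, Theorem B.1: for pairwise disjoint events `F i` and
probability measures `P i`, if `δ = min_i P_i(F_i) ≥ 1/2` then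
`(2δ − 1) log((δ/(1−δ))·(N−1)) ≤ (1/(N−1)) ∑_i KL(P_i ‖ P_1)`. -/
theorem birge_inequality
    {Ω : Type*} [MeasurableSpace Ω] {N : ℕ} (hN : 2 ≤ N)
    (P : Fin N → Measure Ω) (hP : ∀ i, IsProbabilityMeasure (P i))
    (F : Fin N → Set Ω) (hFmeas : ∀ i, MeasurableSet (F i))
    (hdisj : ∀ i j, i ≠ j → Disjoint (F i) (F j))
    (δ : ℝ) (hδdef : δ = ⨅ i, ((P i) (F i)).toReal)
    (hδ : 1 / 2 ≤ δ) :
    ENNReal.ofReal ((2 * δ - 1) * Real.log (δ / (1 - δ) * (N - 1))) ≤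
      (∑ i, klDiv (P i) (P ⟨0, by omega⟩)) / ((N : ℝ≥0∞) - 1) := by
  classical
  set i0 : Fin N := ⟨0, by omega⟩ with hi0_def
  have hden_ne_top : (N : ℝ≥0∞) - 1 ≠ ⊤ :=
    ne_top_of_le_ne_top (ENNReal.natCast_ne_top N) tsub_le_self
  by_cases hac : ∀ i, P i ≪ P i0 ∧ Integrable (llr (P i) (P i0)) (P i)
  swap
  · -- some KL divergence is infinite
    push_neg at hac
    obtain ⟨j, hj⟩ := hac
    have hjtop : klDiv (P j) (P i0) = ⊤ := by
      unfold klDiv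
      rw [if_neg]
      exact fun h => hj h.1 h.2
    have : ∑ i, klDiv (P i) (P i0) = ⊤ :=
      ENNReal.sum_eq_top.2 ⟨j, Finset.mem_univ j, hjtop⟩
    rw [this, ENNReal.top_div, if_neg hden_ne_top]
    exact le_top
  -- now all KL divergences are finite
  haveI : ∀ i, IsProbabilityMeasure (P i) := hP
  set a : Fin N → ℝ := fun i => ((P i) (F i)).toReal with ha_def
  set b : Fin N → ℝ := fun i => ((P i0) (F i)).toReal with hb_def
  have hbdd : BddBelow (Set.range fun i => ((P i) (F i)).toReal) :=
    ⟨0, by rintro x ⟨i, rfl⟩; exact ENNReal.toReal_nonneg⟩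
  have hδle : ∀ i, δ ≤ a i := fun i => hδdef ▸ ciInf_le hbdd i
  have ha1 : ∀ i, a i ≤ 1 := by
    intro i
    have h := ENNReal.toReal_mono ENNReal.one_ne_top (prob_le_one (μ := P i) (s := F i))
    simpa using h
  have hδpos : (0:ℝ) < δ := by linarith
  have haine : ∀ i, P i (F i) ≠ 0 := by
    intro i h
    have := hδle i
    simp only [ha_def, h, ENNReal.toReal_zero] at this
    linarith
  have hbne : ∀ i, P i0 (F i) ≠ 0 := fun i h => haine i ((hac i).1 h)
  have hbpos : ∀ i, 0 < b i := fun i => ENNReal.toReal_pos (hbne i) (measure_ne_top _ _)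
  set i1 : Fin N := ⟨1, by omega⟩ with hi1_def
  have h01 : i0 ≠ i1 := by simp [hi0_def, hi1_def, Fin.ext_iff]
  have hδ1 : δ < 1 := by
    by_contra h
    push_neg at h
    have hF0 : (1:ℝ≥0∞) ≤ P i0 (F i0) := by
      have : (1:ℝ) ≤ ((P i0) (F i0)).toReal := le_trans h (hδle i0)
      simpa using ENNReal.ofReal_le_of_le_toReal this
    have hF0' : P i0 (F i0) = 1 := le_antisymm prob_le_one hF0
    have hcompl : P i0 (F i0)ᶜ = 0 := by
      rw [prob_compl_eq_one_sub (hFmeas i0), hF0', tsub_self]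
    have hsub : F i1 ⊆ (F i0)ᶜ := (hdisj i0 i1 h01).subset_compl_left
    exact hbne i1 (measure_mono_null hsub hcompl)
  have h1δ : (0:ℝ) < 1 - δ := by linarith
  -- integrals
  set T : Fin N → ℝ := fun i => ∫ x, llr (P i) (P i0) x ∂(P i) with hT_def
  have hklb : ∀ i, klb (a i) (b i) ≤ T i := fun i =>
    integral_llr_ge_klb (P i) (P i0) (hac i).1 (hac i).2 (hFmeas i)
  have hT0 : ∀ i, 0 ≤ T i := by
    intro i
    have h := setIntegral_llr_ge (P i) (P i0) (hac i).1 (hac i).2 MeasurableSet.univ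
    simpa [measure_univ] using h
  -- sums over the erased finset
  set t : Finset (Fin N) := Finset.univ.erase i0 with ht_def
  have hi1t : i1 ∈ t := Finset.mem_erase.2 ⟨Ne.symm h01, Finset.mem_univ _⟩
  have ht_ne : t.Nonempty := ⟨i1, hi1t⟩
  set n : ℕ := N - 1 with hn_def
  have hn1 : 1 ≤ n := by omega
  have hcard : t.card = n := by
    rw [ht_def, Finset.card_erase_of_mem (Finset.mem_univ _), Finset.card_univ,
      Fintype.card_fin]
  have hn0R : (0:ℝ) < n := by exact_mod_cast hn1
  have hsum_b : ∑ i ∈ t, b i ≤ 1 - δ := by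
    have hall : (∑ i : Fin N, P i0 (F i)) ≤ 1 := by
      calc ∑ i : Fin N, P i0 (F i) = ∑' i, P i0 (F i) := (tsum_fintype _).symm
        _ = P i0 (⋃ i, F i) := (measure_iUnion (fun i j hij => hdisj i j hij) hFmeas).symm
        _ ≤ 1 := prob_le_one
    have hallR : ∑ i : Fin N, b i ≤ 1 := by
      have h := ENNReal.toReal_mono ENNReal.one_ne_top hall
      rwa [ENNReal.toReal_sum (fun i _ => measure_ne_top _ _), ENNReal.toReal_one] at h
    have hsplit : b i0 + ∑ i ∈ t, b i = ∑ i : Fin N, b i :=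
      Finset.add_sum_erase _ _ (Finset.mem_univ _)
    have hb0δ : δ ≤ b i0 := hδle i0
    linarith
  have hble : ∀ i ∈ t, b i ≤ 1 - δ := fun i hi =>
    le_trans (Finset.single_le_sum (fun j _ => (hbpos j).le) hi) hsum_b
  -- step 1 : pointwise lower bounds
  have step1 : ∀ i ∈ t, klb δ (b i) ≤ T i := fun i hi =>
    le_trans (klb_mono_left (hbpos i) (by linarith [hble i hi]) hδ (hδle i) (ha1 i)) (hklb i)
  -- step 2 : Jensen
  set bb : ℝ := (∑ i ∈ t, b i) / n with hbb_def
  have hsum_b_pos : 0 < ∑ i ∈ t, b i :=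
    Finset.sum_pos (fun i _ => hbpos i) ht_ne
  have hbb0 : 0 < bb := by positivity
  have hbbβ : bb ≤ (1 - δ)/n := by
    rw [hbb_def]
    gcongr
  have hbb1δ : bb ≤ 1 - δ := by
    calc bb ≤ (1 - δ)/n := hbbβ
      _ ≤ (1 - δ)/1 := div_le_div_of_nonneg_left h1δ.le one_pos (by exact_mod_cast hn1)
      _ = 1 - δ := by ring
  have hbb1 : bb < 1 := by linarith
  -- expand the sum
  have hexp : ∀ i ∈ t, klb δ (b i) = δ * Real.log δ + (1 - δ) * Real.log (1 - δ)
      - δ * Real.log (b i) - (1 - δ) * Real.log (1 - b i) := fun i hi =>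
    klb_expand hδpos hδ1 (hbpos i) (by linarith [hble i hi])
  have hsum_exp : ∑ i ∈ t, klb δ (b i) =
      (n:ℝ) * (δ * Real.log δ + (1 - δ) * Real.log (1 - δ))
      - δ * ∑ i ∈ t, Real.log (b i) - (1 - δ) * ∑ i ∈ t, Real.log (1 - b i) := by
    rw [Finset.sum_congr rfl hexp, Finset.sum_sub_distrib, Finset.sum_sub_distrib,
      Finset.sum_const, ← Finset.mul_sum, ← Finset.mul_sum, hcard, nsmul_eq_mul]
  have hj1 := sum_log_le_card_mul_log t ht_ne b (fun i hi => hbpos i)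
  have hj2 := sum_log_le_card_mul_log t ht_ne (fun i => 1 - b i)
    (fun i hi => by show (0:ℝ) < 1 - b i; linarith [hble i hi])
  rw [hcard] at hj1 hj2
  have hsum1b : ∑ i ∈ t, (1 - b i) = (n:ℝ) - ∑ i ∈ t, b i := by
    rw [Finset.sum_sub_distrib, Finset.sum_const, hcard, nsmul_eq_mul, mul_one]
  have h1bb : ((n:ℝ) - ∑ i ∈ t, b i) / n = 1 - bb := by
    rw [hbb_def]
    field_simp
  rw [hsum1b, h1bb] at hj2
  rw [← hbb_def] at hj1
  have hklbb : klb δ bb = δ * Real.log δ + (1 - δ) * Real.log (1 - δ)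
      - δ * Real.log bb - (1 - δ) * Real.log (1 - bb) :=
    klb_expand hδpos hδ1 hbb0 hbb1
  have step2 : (n:ℝ) * klb δ bb ≤ ∑ i ∈ t, klb δ (b i) := by
    rw [hsum_exp, hklbb]
    have m1 : δ * ∑ i ∈ t, Real.log (b i) ≤ δ * ((n:ℝ) * Real.log bb) :=
      mul_le_mul_of_nonneg_left hj1 hδpos.le
    have m2 : (1 - δ) * ∑ i ∈ t, Real.log (1 - b i) ≤ (1 - δ) * ((n:ℝ) * Real.log (1 - bb)) :=
      mul_le_mul_of_nonneg_left hj2 h1δ.le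
    ring_nf
    ring_nf at m1 m2
    linarith
  -- step 3 : monotonicity in the second argument
  have step3 : klb δ ((1 - δ)/n) ≤ klb δ bb :=
    klb_anti_right hδ hδ1 hbb0 hbbβ (by
      calc (1 - δ)/n ≤ (1 - δ)/1 := div_le_div_of_nonneg_left h1δ.le one_pos (by exact_mod_cast hn1)
        _ = 1 - δ := by ring
        _ ≤ δ := by linarith)
  -- step 4 : final algebra
  have step4 : (2*δ - 1) * Real.log (δ / (1 - δ) * n) ≤ klb δ ((1 - δ)/n) :=
    klb_final hδ hδ1 hn1
  -- combine the real chain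
  have hsumT : ∑ i ∈ t, klb δ (b i) ≤ ∑ i ∈ t, T i := Finset.sum_le_sum step1
  have hTall : ∑ i ∈ t, T i ≤ ∑ i : Fin N, T i := by
    have hsplit : T i0 + ∑ i ∈ t, T i = ∑ i : Fin N, T i :=
      Finset.add_sum_erase _ _ (Finset.mem_univ _)
    linarith [hT0 i0]
  have htotal : (n:ℝ) * ((2*δ - 1) * Real.log (δ / (1 - δ) * n)) ≤ ∑ i : Fin N, T i := by
    calc (n:ℝ) * ((2*δ - 1) * Real.log (δ / (1 - δ) * n))
        ≤ (n:ℝ) * klb δ ((1 - δ)/n) := mul_le_mul_of_nonneg_left step4 hn0R.le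
      _ ≤ (n:ℝ) * klb δ bb := mul_le_mul_of_nonneg_left step3 hn0R.le
      _ ≤ ∑ i ∈ t, klb δ (b i) := step2
      _ ≤ ∑ i ∈ t, T i := hsumT
      _ ≤ ∑ i : Fin N, T i := hTall
  -- ENNReal conclusion
  have hklDiv : ∀ i, klDiv (P i) (P i0) = ENNReal.ofReal (T i) := by
    intro i
    unfold klDiv
    rw [if_pos (hac i)]
  have hNR : ((N:ℝ) - 1) = (n:ℝ) := by
    rw [hn_def, Nat.cast_sub (by omega : 1 ≤ N), Nat.cast_one]
  have hLnonneg : 0 ≤ (2*δ - 1) * Real.log (δ / (1 - δ) * ((N:ℝ) - 1)) := by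
    apply mul_nonneg (by linarith)
    apply Real.log_nonneg
    have h1 : (1:ℝ) ≤ δ / (1 - δ) := by
      rw [le_div_iff₀ h1δ]
      linarith
    have h2 : (1:ℝ) ≤ (N:ℝ) - 1 := by
      rw [hNR]; exact_mod_cast hn1
    nlinarith
  have hdC : (N : ℝ≥0∞) - 1 = ((n:ℕ) : ℝ≥0∞) := by
    rw [hn_def, ENNReal.natCast_sub, Nat.cast_one]
  calc ENNReal.ofReal ((2 * δ - 1) * Real.log (δ / (1 - δ) * ((N:ℝ) - 1)))
      ≤ ENNReal.ofReal (∑ i : Fin N, T i) / ((N : ℝ≥0∞) - 1) := by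
        rw [hdC, ENNReal.le_div_iff_mul_le
          (Or.inl (by exact_mod_cast Nat.cast_ne_zero.2 (by omega : n ≠ 0)))
          (Or.inl (ENNReal.natCast_ne_top n))]
        rw [← ENNReal.ofReal_natCast n, ← ENNReal.ofReal_mul hLnonneg]
        apply ENNReal.ofReal_le_ofReal
        rw [hNR]
        linarith [htotal]
    _ = (∑ i, klDiv (P i) (P i0)) / ((N : ℝ≥0∞) - 1) := by
        rw [ENNReal.ofReal_sum_of_nonneg (fun i _ => hT0 i)]
        congr 1
        exact Finset.sum_congr rfl fun i _ => (hklDiv i).symm
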